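/- Let G be a graph on n vertices, let 𝐇₁ = (H₁, 𝐤, 𝐥) be a (k,l)-bilabelled graph and 𝐇₂ = (H₂, 𝐪, 𝐦) be a (q,m)-bilabelled graph, and let 𝐇₁ ⊗ 𝐇₂ be the (k+q, l+m)-bilabelled graph whose underlying graph is the disjoint union H₁ ⊔ H₂ (vertex set V(H₁) ⊕ V(H₂), with adjacency inherited from H₁ and H₂ on each summand and no edges between the summands), with input tuple the concatenation of 𝐤 and 𝐪 (composed with the summand inclusions) and output tuple the concatenation of 𝐥 and 𝐦. Then, under the identification of (Fin (l+m) → Fin n) with (Fin l → Fin n) × (Fin m → Fin n) and of (Fin (k+q) → Fin n) with (Fin k → Fin n) × (Fin q → Fin n) given by Fin.append, the Kronecker product X_{𝐇₁}^G ⊗ X_{𝐇₂}^G equals X_{𝐇₁ ⊗ 𝐇₂}^G. -/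

import Mathlib

noncomputable def homMatrix (n : ℕ) (adjG : Fin n → Fin n → Prop)
    {V : Type} [Fintype V] (adjH : V → V → Prop)
    {k l : ℕ} (kt : Fin k → V) (lt : Fin l → V) :
    Matrix (Fin l → Fin n) (Fin k → Fin n) ℝ :=
  Matrix.of fun I J =>
    (Nat.card {φ : V → Fin n //
      (∀ u v, adjH u v → adjG (φ u) (φ v)) ∧ φ ∘ lt = I ∧ φ ∘ kt = J} : ℝ)

/-!
A homomorphism from a disjoint union `H₁ ⊔ H₂` is exactly a pair of homomorphisms from `H₁`
and from `H₂`, and since `Fin.append` is injective, the label constraints on the concatenated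
tuples split into the constraints for each factor. Hence the homomorphisms counted by an entry
of `X_{𝐇₁ ⊗ 𝐇₂}` are in bijection with pairs counted by the two entries of the Kronecker factors.
-/

namespace Fin

variable {α β : Type*} {a b : ℕ}

theorem comp_append (f : α → β) (x : Fin a → α) (y : Fin b → α) :
    f ∘ append x y = append (f ∘ x) (f ∘ y) := by
  funext i
  induction i using addCases <;> simp

theorem append_inj_iff {x x' : Fin a → α} {y y' : Fin b → α} :
    append x y = append x' y' ↔ x = x' ∧ y = y' :=
  (appendEquiv a b).injective.eq_iff.trans Prod.mk_inj

end Fin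

section BilabelledHom

variable {V V₁ V₂ W : Type*} {k l q m : ℕ}

def IsBilabelledHom (adjG : W → W → Prop) (adjH : V → V → Prop) (kt : Fin k → V)
    (lt : Fin l → V) (I : Fin l → W) (J : Fin k → W) (φ : V → W) : Prop :=
  (∀ u v, adjH u v → adjG (φ u) (φ v)) ∧ φ ∘ lt = I ∧ φ ∘ kt = J

theorem sumElim_isHom_liftRel_iff (adjG : W → W → Prop) (adj₁ : V₁ → V₁ → Prop)
    (adj₂ : V₂ → V₂ → Prop) (φ₁ : V₁ → W) (φ₂ : V₂ → W) :
    (∀ u v, Sum.LiftRel adj₁ adj₂ u v → adjG (Sum.elim φ₁ φ₂ u) (Sum.elim φ₁ φ₂ v)) ↔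
      (∀ u v, adj₁ u v → adjG (φ₁ u) (φ₁ v)) ∧ (∀ u v, adj₂ u v → adjG (φ₂ u) (φ₂ v)) := by
  refine ⟨fun h => ⟨fun u v huv => h (.inl u) (.inl v) (.inl huv),
    fun u v huv => h (.inr u) (.inr v) (.inr huv)⟩, ?_⟩
  rintro ⟨h₁, h₂⟩ _ _ (⟨huv⟩ | ⟨huv⟩)
  exacts [h₁ _ _ huv, h₂ _ _ huv]

theorem sumElim_comp_append_eq_append_iff (φ₁ : V₁ → W) (φ₂ : V₂ → W) (x : Fin k → V₁)
    (y : Fin q → V₂) (I₁ : Fin k → W) (I₂ : Fin q → W) :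
    Sum.elim φ₁ φ₂ ∘ Fin.append (fun i => Sum.inl (x i)) (fun i => Sum.inr (y i)) =
        Fin.append I₁ I₂ ↔ φ₁ ∘ x = I₁ ∧ φ₂ ∘ y = I₂ := by
  rw [Fin.comp_append]
  exact Fin.append_inj_iff

theorem sumElim_isBilabelledHom_iff (adjG : W → W → Prop) (adjH₁ : V₁ → V₁ → Prop)
    (adjH₂ : V₂ → V₂ → Prop) {adj : V₁ ⊕ V₂ → V₁ ⊕ V₂ → Prop}
    (hadj : ∀ u v, adj u v ↔ Sum.LiftRel adjH₁ adjH₂ u v)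
    (kt : Fin k → V₁) (lt : Fin l → V₁) (qt : Fin q → V₂) (mt : Fin m → V₂)
    (I₁ : Fin l → W) (I₂ : Fin m → W) (J₁ : Fin k → W) (J₂ : Fin q → W)
    (φ₁ : V₁ → W) (φ₂ : V₂ → W) :
    IsBilabelledHom adjG adj
        (Fin.append (fun i => Sum.inl (kt i)) (fun i => Sum.inr (qt i)))
        (Fin.append (fun i => Sum.inl (lt i)) (fun i => Sum.inr (mt i)))
        (Fin.append I₁ I₂) (Fin.append J₁ J₂) (Sum.elim φ₁ φ₂) ↔
      IsBilabelledHom adjG adjH₁ kt lt I₁ J₁ φ₁ ∧ IsBilabelledHom adjG adjH₂ qt mt I₂ J₂ φ₂ := by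
  simp only [IsBilabelledHom, hadj, sumElim_isHom_liftRel_iff, sumElim_comp_append_eq_append_iff]
  tauto

def bilabelledHomProdEquiv (adjG : W → W → Prop) (adjH₁ : V₁ → V₁ → Prop)
    (adjH₂ : V₂ → V₂ → Prop) {adj : V₁ ⊕ V₂ → V₁ ⊕ V₂ → Prop}
    (hadj : ∀ u v, adj u v ↔ Sum.LiftRel adjH₁ adjH₂ u v)
    (kt : Fin k → V₁) (lt : Fin l → V₁) (qt : Fin q → V₂) (mt : Fin m → V₂)
    (I₁ : Fin l → W) (I₂ : Fin m → W) (J₁ : Fin k → W) (J₂ : Fin q → W) :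
    {φ₁ // IsBilabelledHom adjG adjH₁ kt lt I₁ J₁ φ₁} ×
        {φ₂ // IsBilabelledHom adjG adjH₂ qt mt I₂ J₂ φ₂} ≃
      {φ // IsBilabelledHom adjG adj
        (Fin.append (fun i => Sum.inl (kt i)) (fun i => Sum.inr (qt i)))
        (Fin.append (fun i => Sum.inl (lt i)) (fun i => Sum.inr (mt i)))
        (Fin.append I₁ I₂) (Fin.append J₁ J₂) φ} :=
  Equiv.subtypeProdEquivProd.symm.trans <|
    (Equiv.sumArrowEquivProdArrow V₁ V₂ W).symm.subtypeEquiv fun φ =>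
      (sumElim_isBilabelledHom_iff adjG adjH₁ adjH₂ hadj kt lt qt mt I₁ I₂ J₁ J₂ φ.1 φ.2).symm

end BilabelledHom

theorem homMatrix_kronecker
    (n : ℕ) (adjG : Fin n → Fin n → Prop)
    {V₁ V₂ : Type} [Fintype V₁] [Fintype V₂]
    (adjH₁ : V₁ → V₁ → Prop)
    (adjH₂ : V₂ → V₂ → Prop)
    {k l q m : ℕ} (kt : Fin k → V₁) (lt : Fin l → V₁)
    (qt : Fin q → V₂) (mt : Fin m → V₂)
    (I₁ : Fin l → Fin n) (I₂ : Fin m → Fin n)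
    (J₁ : Fin k → Fin n) (J₂ : Fin q → Fin n) :
    Matrix.kroneckerMap (· * ·)
      (homMatrix n adjG adjH₁ kt lt) (homMatrix n adjG adjH₂ qt mt)
      (I₁, I₂) (J₁, J₂) =
    homMatrix n adjG
      (fun u v : V₁ ⊕ V₂ =>
        match u, v with
        | Sum.inl a, Sum.inl b => adjH₁ a b
        | Sum.inr a, Sum.inr b => adjH₂ a b
        | _, _ => False)
      (Fin.append (fun i => Sum.inl (kt i)) (fun i => Sum.inr (qt i)))
      (Fin.append (fun i => Sum.inl (lt i)) (fun i => Sum.inr (mt i)))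
      (Fin.append I₁ I₂) (Fin.append J₁ J₂) := by
  rw [Matrix.kroneckerMap_apply]
  simp only [homMatrix, Matrix.of_apply]
  rw [← Nat.cast_mul, ← Nat.card_prod]
  exact congrArg _ <| Nat.card_congr <|
    bilabelledHomProdEquiv adjG adjH₁ adjH₂ (by rintro (a | a) (b | b) <;> simp) kt lt qt mt
      I₁ I₂ J₁ J₂
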